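/- arXiv:2006.09461 — 3 statements merged into one kernel-verified Lean document; each statement's English description precedes it below -/
import Mathlib

section
/- Let a be an isotropic C-heavy-tailed random vector in ℝ^n and let τ > 0. Then for every v ∈ ℝ^n with ‖v‖ ≤ 1, E[φ_τ(⟨a, v⟩)] ≥ (1 − C⁴/τ²)·‖v‖². -/
open MeasureTheory ProbabilityTheory Real

noncomputable section

/-- Euclidean dot product on `Fin n → ℝ`. -/
def dotp {n : ℕ} (x y : Fin n → ℝ) : ℝ := ∑ i, x i * y i

/-- Squared Euclidean norm on `Fin n → ℝ`. -/
def euclNormSq {n : ℕ} (x : Fin n → ℝ) : ℝ := ∑ i, x i ^ 2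

/-- Euclidean norm on `Fin n → ℝ`. -/
def euclNorm {n : ℕ} (x : Fin n → ℝ) : ℝ := Real.sqrt (euclNormSq x)

/-- A random vector is isotropic if `E[a aᵀ] = I`. -/
def IsIsotropic {Ω : Type*} [MeasurableSpace Ω] (μ : Measure Ω) {n : ℕ}
    (a : Ω → Fin n → ℝ) : Prop :=
  ∀ i j : Fin n, ∫ ω, a ω i * a ω j ∂μ = if i = j then 1 else 0

/-- A random vector is `C`-heavy-tailed if all its one-dimensional marginals have fourth
moments bounded in terms of second moments: `(E⟨a,u⟩⁴)^(1/4) ≤ C (E⟨a,u⟩²)^(1/2)`. -/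
def IsHeavyTailed {Ω : Type*} [MeasurableSpace Ω] (μ : Measure Ω) {n : ℕ}
    (C : ℝ) (a : Ω → Fin n → ℝ) : Prop :=
  (∀ u : Fin n → ℝ, Integrable (fun ω => (dotp (a ω) u) ^ 4) μ) ∧
  ∀ u : Fin n → ℝ,
    (∫ ω, (dotp (a ω) u) ^ 4 ∂μ) ^ ((1 : ℝ)/4) ≤ C * (∫ ω, (dotp (a ω) u) ^ 2 ∂μ) ^ ((1 : ℝ)/2)

/-- Truncated quadratic function `φ_τ`. -/
def phiTrunc (τ u : ℝ) : ℝ := if |u| ≤ τ then u ^ 2 else τ ^ 2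

/-- If `a` is an isotropic `C`-heavy-tailed random vector in `ℝ^n` and `τ > 0`,
then for every `v` with `‖v‖ ≤ 1`, `E[φ_τ(⟨a, v⟩)] ≥ (1 - C⁴/τ²) ‖v‖²`. -/
theorem truncated_quadratic_expectation_lower_bound
    {Ω : Type*} [MeasurableSpace Ω] (μ : Measure Ω) [IsProbabilityMeasure μ]
    {n : ℕ} (C τ : ℝ) (a : Ω → Fin n → ℝ)
    (hiso : IsIsotropic μ a) (hht : IsHeavyTailed μ C a) (hτ : 0 < τ) :
    ∀ v : Fin n → ℝ, euclNorm v ≤ 1 →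
      (1 - C ^ 4 / τ ^ 2) * euclNormSq v ≤ ∫ ω, phiTrunc τ (dotp (a ω) v) ∂μ := by
  intro v hv
  have ht2 : (0:ℝ) < τ ^ 2 := by positivity
  -- integrability of squares of marginals
  have hsq : ∀ u : Fin n → ℝ, Integrable (fun ω => (dotp (a ω) u) ^ 2) μ := by
    intro u
    have h4 := hht.1 u
    have hasm : AEStronglyMeasurable (fun ω => (dotp (a ω) u) ^ 2) μ := by
      have h := Real.continuous_sqrt.comp_aestronglyMeasurable h4.1
      convert h using 2 with ω
      rw [show (dotp (a ω) u) ^ 4 = ((dotp (a ω) u) ^ 2) ^ 2 by ring,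
        Real.sqrt_sq (sq_nonneg _)]
    refine ((h4.add (integrable_const 1)).mono hasm ?_)
    filter_upwards with ω
    simp only [Pi.add_apply]
    have h1 : (0:ℝ) ≤ (dotp (a ω) u) ^ 2 := sq_nonneg _
    rw [Real.norm_eq_abs, Real.norm_eq_abs, abs_of_nonneg h1]
    refine le_trans ?_ (le_abs_self _)
    nlinarith [sq_nonneg ((dotp (a ω) u) ^ 2 - 1)]
  -- dotp basics
  have hsingle : ∀ (ω : Ω) (i : Fin n), dotp (a ω) (Pi.single i 1) = a ω i := by
    intro ω i; simp [dotp, Pi.single_apply]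
  have hadd : ∀ (ω : Ω) (u w : Fin n → ℝ), dotp (a ω) (u + w) = dotp (a ω) u + dotp (a ω) w := by
    intro ω u w; simp [dotp, mul_add, Finset.sum_add_distrib]
  have hsub : ∀ (ω : Ω) (u w : Fin n → ℝ), dotp (a ω) (u - w) = dotp (a ω) u - dotp (a ω) w := by
    intro ω u w; simp [dotp, mul_sub, Finset.sum_sub_distrib]
  -- integrability of products a_i a_j
  have hprod : ∀ i j : Fin n, Integrable (fun ω => a ω i * a ω j) μ := by
    intro i j
    have h1 := hsq (Pi.single i 1 + Pi.single j 1)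
    have h2 := hsq (Pi.single i 1 - Pi.single j 1)
    refine ((h1.sub h2).div_const 4).congr (Filter.Eventually.of_forall fun ω => ?_)
    simp only [Pi.sub_apply]
    rw [hadd, hsub, hsingle, hsingle]
    ring
  -- expand the square
  have hexp : ∀ ω, (dotp (a ω) v) ^ 2 = ∑ i, ∑ j, (v i * v j) * (a ω i * a ω j) := by
    intro ω
    rw [show (dotp (a ω) v) ^ 2 = dotp (a ω) v * dotp (a ω) v by ring, dotp,
      Finset.sum_mul_sum]
    exact Finset.sum_congr rfl fun i _ => Finset.sum_congr rfl fun j _ => by ring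
  -- second moment = euclNormSq v
  have hE2 : ∫ ω, (dotp (a ω) v) ^ 2 ∂μ = euclNormSq v := by
    have key : ∀ i j : Fin n, (v i * v j) * ∫ ω, a ω i * a ω j ∂μ
        = if i = j then v i ^ 2 else 0 := by
      intro i j
      rw [hiso i j]
      split_ifs with h
      · subst h; ring
      · ring
    calc ∫ ω, (dotp (a ω) v) ^ 2 ∂μ
        = ∫ ω, ∑ i, ∑ j, (v i * v j) * (a ω i * a ω j) ∂μ := by
          simp_rw [hexp]
      _ = ∑ i, ∑ j, (v i * v j) * ∫ ω, a ω i * a ω j ∂μ := by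
          rw [integral_finset_sum _ fun i _ =>
            integrable_finset_sum _ fun j _ => (hprod i j).const_mul _]
          exact Finset.sum_congr rfl fun i _ => by
            rw [integral_finset_sum _ fun j _ => (hprod i j).const_mul _]
            exact Finset.sum_congr rfl fun j _ => integral_const_mul _ _
      _ = euclNormSq v := by
          simp [key, euclNormSq, Finset.sum_ite_eq]
  set E2 : ℝ := euclNormSq v with hE2def
  have hE2nonneg : 0 ≤ E2 := Finset.sum_nonneg fun i _ => sq_nonneg _
  have hE2le1 : E2 ≤ 1 := by
    have h := hv
    unfold euclNorm at h
    nlinarith [Real.sq_sqrt hE2nonneg, Real.sqrt_nonneg E2]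
  set E4 : ℝ := ∫ ω, (dotp (a ω) v) ^ 4 ∂μ with hE4def
  have hE4nonneg : 0 ≤ E4 := integral_nonneg fun ω => by positivity
  -- heavy tail: E4 ≤ C^4 * E2^2
  have hHT : E4 ≤ C ^ 4 * E2 ^ 2 := by
    have h := hht.2 v
    rw [hE2] at h
    have h1 : (0:ℝ) ≤ E4 ^ ((1:ℝ)/4) := Real.rpow_nonneg hE4nonneg _
    have h2 : (E4 ^ ((1:ℝ)/4)) ^ (4:ℕ) ≤ (C * E2 ^ ((1:ℝ)/2)) ^ (4:ℕ) :=
      pow_le_pow_left₀ h1 h 4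
    have h3 : (E4 ^ ((1:ℝ)/4)) ^ (4:ℕ) = E4 := by
      rw [← Real.rpow_natCast (E4 ^ ((1:ℝ)/4)) 4, ← Real.rpow_mul hE4nonneg]
      norm_num
    have h4 : (E2 ^ ((1:ℝ)/2)) ^ (4:ℕ) = E2 ^ 2 := by
      rw [← Real.rpow_natCast (E2 ^ ((1:ℝ)/2)) 4, ← Real.rpow_mul hE2nonneg]
      norm_num
    rw [h3] at h2
    calc E4 ≤ (C * E2 ^ ((1:ℝ)/2)) ^ (4:ℕ) := h2
      _ = C ^ 4 * E2 ^ 2 := by rw [mul_pow, h4]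
  -- phiTrunc = min
  have hphi : ∀ u : ℝ, phiTrunc τ u = min (u ^ 2) (τ ^ 2) := by
    intro u
    unfold phiTrunc
    rcases le_or_gt |u| τ with h | h
    · rw [if_pos h, min_eq_left]; nlinarith [sq_abs u, abs_nonneg u]
    · rw [if_neg (not_le.2 h), min_eq_right]; nlinarith [sq_abs u, abs_nonneg u]
  -- integrability of phiTrunc ∘ dotp
  have hphiInt : Integrable (fun ω => phiTrunc τ (dotp (a ω) v)) μ := by
    have hmeas : AEStronglyMeasurable (fun ω => phiTrunc τ (dotp (a ω) v)) μ := by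
      have h := (hsq v).1.inf (aestronglyMeasurable_const (b := τ ^ 2))
      refine h.congr (Filter.Eventually.of_forall fun ω => ?_)
      simp [hphi, Pi.inf_apply]
    refine Integrable.mono' (integrable_const (τ ^ 2)) hmeas ?_
    filter_upwards with ω
    rw [hphi, Real.norm_eq_abs, abs_of_nonneg (le_min (sq_nonneg _) (sq_nonneg _))]
    exact min_le_right _ _
  -- pointwise bound
  have hbound : ∀ ω, (dotp (a ω) v) ^ 2 - (dotp (a ω) v) ^ 4 / τ ^ 2
      ≤ phiTrunc τ (dotp (a ω) v) := by
    intro ω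
    rw [hphi]
    set x := dotp (a ω) v with hx
    rcases le_total (x ^ 2) (τ ^ 2) with h | h
    · rw [min_eq_left h]
      have : (0:ℝ) ≤ x ^ 4 / τ ^ 2 := by positivity
      linarith
    · rw [min_eq_right h]
      have h1 : x ^ 2 - τ ^ 2 ≤ x ^ 4 / τ ^ 2 := by
        rw [le_div_iff₀ ht2]
        nlinarith [sq_nonneg (x ^ 2 - τ ^ 2)]
      linarith
  -- conclude
  have hintlhs : Integrable (fun ω => (dotp (a ω) v) ^ 2 - (dotp (a ω) v) ^ 4 / τ ^ 2) μ :=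
    (hsq v).sub ((hht.1 v).div_const _)
  have hle : ∫ ω, ((dotp (a ω) v) ^ 2 - (dotp (a ω) v) ^ 4 / τ ^ 2) ∂μ
      ≤ ∫ ω, phiTrunc τ (dotp (a ω) v) ∂μ :=
    integral_mono hintlhs hphiInt hbound
  rw [integral_sub (hsq v) ((hht.1 v).div_const _), integral_div, hE2, ← hE4def] at hle
  have hC4 : (0:ℝ) ≤ C ^ 4 := by positivity
  have h1 : E4 ≤ C ^ 4 * E2 := le_trans hHT (by
    nlinarith [mul_nonneg (mul_nonneg hC4 hE2nonneg) (sub_nonneg.2 hE2le1)])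
  have h2 : E4 / τ ^ 2 ≤ C ^ 4 * E2 / τ ^ 2 := by gcongr
  have h3 : (1 - C ^ 4 / τ ^ 2) * E2 = E2 - C ^ 4 * E2 / τ ^ 2 := by ring
  rw [h3]
  linarith

end
end

section
/- Let U ∈ ℝ^{n×2k} be a matrix with orthonormal columns, let S = {Uz : z ∈ ℝ^{2k}, ‖Uz‖ = 1}, let τ > 0, let a₁, …, a_m be i.i.d. copies of an isotropic random vector a in ℝ^n, and let ε₁, …, ε_m be i.i.d. Rademacher (±1) random variables independent of the a_i. Then E[sup_{v ∈ S} |(1/m)·Σ_{i=1}^m ε_i · φ_τ(⟨a_i, v⟩)|] ≤ 4τ·√(2k/m). -/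
/-!
The signs are uniform on `{±1}^m` and independent of the sample, so the expectation equals
`E[2⁻ᵐ ∑_b sup_{v ∈ S} |(1/m) ∑ᵢ bᵢ φ_τ(⟨aᵢ, v⟩)|]`. For a fixed sample, `φ_τ` is `2τ`-Lipschitz
with `φ_τ(0) = 0`, so the Ledoux–Talagrand contraction principle (replace one coordinate at a
time) bounds the sign average by `4τ/m` times the sign average of `sup_{v ∈ S} |∑ᵢ bᵢ ⟨aᵢ, v⟩|`.
Writing `v = U z` with `‖z‖ = 1`, this supremum is at most `‖∑ᵢ bᵢ Uᵀ aᵢ‖`, whose sign average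
is at most `(∑ᵢ ‖Uᵀ aᵢ‖²)^{1/2}` by Cauchy–Schwarz. Isotropy gives `E ‖Uᵀ aᵢ‖² = 2k`, and
Jensen's inequality for the square root yields the bound `(4τ/m) √(2km)`. Since `S` is compact,
the supremum is continuous in the sample, hence measurable.
-/

open MeasureTheory ProbabilityTheory Real

noncomputable section

-- A sign pattern `b : Fin m → Bool` stands for the Rademacher vector `(boolSign (b i))ᵢ`, so
-- expectations over the signs become averages `2⁻ᵐ ∑_b`.
def boolSign (b : Bool) : ℝ := if b then 1 else -1

@[simp] lemma boolSign_true : boolSign true = 1 := rfl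

@[simp] lemma boolSign_false : boolSign false = -1 := rfl

@[simp] lemma boolSign_not (b : Bool) : boolSign (!b) = -boolSign b := by cases b <;> simp

@[simp] lemma abs_boolSign (b : Bool) : |boolSign b| = 1 := by cases b <;> simp

lemma boolSign_injective : Function.Injective boolSign := by
  intro b c h; cases b <;> cases c <;> first | rfl | norm_num [boolSign] at h

section SignedSums

variable {m : ℕ}

def signedSum (b : Fin m → Bool) (y : Fin m → ℝ) : ℝ := ∑ i, boolSign (b i) * y i

lemma abs_signedSum_le (b : Fin m → Bool) {y : Fin m → ℝ} {C : ℝ} (hy : ∀ i, |y i| ≤ C) :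
    |signedSum b y| ≤ m * C := by
  calc |signedSum b y| ≤ ∑ i, |boolSign (b i) * y i| := Finset.abs_sum_le_sum_abs _ _
    _ ≤ ∑ _i : Fin m, C := Finset.sum_le_sum fun i _ => by simpa [abs_mul] using hy i
    _ = m * C := by simp

lemma signedSum_not (b : Fin m → Bool) (y : Fin m → ℝ) :
    signedSum (fun i => !b i) y = -signedSum b y := by
  simp [signedSum, Finset.sum_neg_distrib]

lemma signedSum_update (b : Fin m → Bool) (y : Fin m → ℝ) (j : Fin m) (c : Bool) :
    signedSum (Function.update b j c) y =
      signedSum b (Function.update y j 0) + boolSign c * y j := by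
  classical
  simp only [signedSum, Fintype.sum_eq_add_sum_compl j, Function.update_self, mul_zero, zero_add]
  rw [add_comm]
  congr 1
  refine Finset.sum_congr rfl fun i hi => ?_
  have hij : i ≠ j := by simpa using hi
  simp [Function.update_of_ne hij]

def flipAt (j : Fin m) : Equiv.Perm (Fin m → Bool) :=
  Function.Involutive.toPerm (fun b => Function.update b j (!b j)) fun b => by
    ext i; rcases eq_or_ne i j with rfl | h <;> simp [Function.update_of_ne, *]

lemma flipAt_apply (j : Fin m) (b : Fin m → Bool) : flipAt j b = Function.update b j (!b j) := rfl

lemma sum_update_true_add_update_false (j : Fin m) (G : (Fin m → Bool) → ℝ) :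
    ∑ b, (G (Function.update b j true) + G (Function.update b j false)) = 2 * ∑ b, G b := by
  have hpair : ∀ b, G (Function.update b j true) + G (Function.update b j false) =
      G b + G (flipAt j b) := by
    intro b
    have hb : Function.update b j (b j) = b := Function.update_eq_self j b
    rw [flipAt_apply]
    cases hbj : b j <;> rw [hbj] at hb <;> simp [hb, add_comm]
  rw [Finset.sum_congr rfl fun b _ => hpair b, Finset.sum_add_distrib,
    Equiv.sum_comp (flipAt j) G, two_mul]

lemma sum_boolSign_mul_boolSign (i i' : Fin m) :
    ∑ b : Fin m → Bool, boolSign (b i) * boolSign (b i') = if i = i' then 2 ^ m else 0 := by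
  split_ifs with h
  · subst h
    have : ∀ b : Fin m → Bool, boolSign (b i) * boolSign (b i) = 1 := fun b => by
      cases b i <;> norm_num
    simp [this]
  · have hflip : ∀ b, boolSign (flipAt i b i) * boolSign (flipAt i b i') =
        -(boolSign (b i) * boolSign (b i')) := fun b => by
      simp [flipAt_apply, Function.update_of_ne (Ne.symm h)]
    have := Equiv.sum_comp (flipAt i) fun b => boolSign (b i) * boolSign (b i')
    simp only [hflip, Finset.sum_neg_distrib] at this
    linarith

lemma sum_signedSum_sq (y : Fin m → ℝ) :
    ∑ b, signedSum b y ^ 2 = 2 ^ m * ∑ i, y i ^ 2 := by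
  have hexp : ∀ b, signedSum b y ^ 2 =
      ∑ i, ∑ i', boolSign (b i) * boolSign (b i') * (y i * y i') := fun b => by
    rw [signedSum, sq, Finset.sum_mul_sum]
    exact Finset.sum_congr rfl fun i _ => Finset.sum_congr rfl fun i' _ => by ring
  simp_rw [hexp]
  rw [Finset.sum_comm]
  simp_rw [Finset.sum_comm (γ := Fin m → Bool), ← Finset.sum_mul, sum_boolSign_mul_boolSign,
    ite_mul, zero_mul, Finset.sum_ite_eq, Finset.mem_univ, if_true, Finset.mul_sum, sq]

end SignedSums

section Contraction

open NNReal

variable {ι : Type*} {m : ℕ}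

lemma abs_sub_le_of_lipschitzWith {L : ℝ≥0} {φ : ℝ → ℝ} (hφ : LipschitzWith L φ) (s t : ℝ) :
    |φ s - φ t| ≤ L * |s - t| := by
  simpa [Real.dist_eq] using hφ.dist_le_mul s t

lemma lipschitzWith_const_mul (L : ℝ≥0) : LipschitzWith L fun t : ℝ => L * t :=
  LipschitzWith.of_dist_le_mul fun s t => by simp [Real.dist_eq, ← mul_sub, abs_mul]

lemma abs_le_mul_abs_of_lipschitzWith {L : ℝ≥0} {φ : ℝ → ℝ} (hφ : LipschitzWith L φ)
    (hφ0 : φ 0 = 0) (t : ℝ) : |φ t| ≤ L * |t| := by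
  simpa [hφ0] using abs_sub_le_of_lipschitzWith hφ t 0

-- The left side is `max (α + β) (max α (max β 0))`; the Lipschitz bound controls `α + β`, and
-- `|φ u| ≤ L |u|` controls `α` and `β`.
lemma max_add_max_le_of_lipschitzWith {L : ℝ≥0} {φ : ℝ → ℝ} (hφ : LipschitzWith L φ)
    (hφ0 : φ 0 = 0) {a a' u u' P Q : ℝ} (hP : max (a + L * u) 0 ≤ P)
    (hP' : max (a' + L * u') 0 ≤ P) (hQ : max (a - L * u) 0 ≤ Q)
    (hQ' : max (a' - L * u') 0 ≤ Q) :
    max (a + φ u) 0 + max (a' - φ u') 0 ≤ P + Q := by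
  have h := abs_le.1 (abs_sub_le_of_lipschitzWith hφ u u')
  have hu := abs_le.1 (abs_sub_le_of_lipschitzWith hφ u 0)
  have hu' := abs_le.1 (abs_sub_le_of_lipschitzWith hφ u' 0)
  simp only [hφ0, sub_zero] at hu hu'
  simp only [max_le_iff] at hP hP' hQ hQ'
  rcases abs_cases (u - u') with ⟨e, -⟩ | ⟨e, -⟩ <;> rw [e] at h <;>
  rcases abs_cases u with ⟨e, -⟩ | ⟨e, -⟩ <;> rw [e] at hu <;>
  rcases abs_cases u' with ⟨e, -⟩ | ⟨e, -⟩ <;> rw [e] at hu' <;>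
  rcases le_total (a + φ u) 0 with h1 | h1 <;> simp only [max_eq_left, max_eq_right, h1] <;>
  rcases le_total (a' - φ u') 0 with h2 | h2 <;> simp only [max_eq_left, max_eq_right, h2] <;>
  linarith

lemma bddAbove_range_max_zero {f : ι → ℝ} {C : ℝ} (h : ∀ v, |f v| ≤ C) :
    BddAbove (Set.range fun v => max (f v) 0) :=
  ⟨max C 0, by rintro _ ⟨v, rfl⟩; exact max_le_max ((le_abs_self _).trans (h v)) le_rfl⟩

lemma iSup_max_add_iSup_max_le [Nonempty ι] {L : ℝ≥0} {φ : ℝ → ℝ} (hφ : LipschitzWith L φ)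
    (hφ0 : φ 0 = 0) {A u : ι → ℝ} {CA Cu : ℝ} (hA : ∀ v, |A v| ≤ CA) (hu : ∀ v, |u v| ≤ Cu) :
    (⨆ v, max (A v + φ (u v)) 0) + (⨆ v, max (A v - φ (u v)) 0) ≤
      (⨆ v, max (A v + L * u v) 0) + ⨆ v, max (A v - L * u v) 0 := by
  have hLu : ∀ v, |L * u v| ≤ L * Cu := fun v => by
    rw [abs_mul, NNReal.abs_eq]; exact mul_le_mul_of_nonneg_left (hu v) L.2
  have hbdd_add : BddAbove (Set.range fun v => max (A v + L * u v) 0) :=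
    bddAbove_range_max_zero fun v => (abs_add_le _ _).trans (add_le_add (hA v) (hLu v))
  have hbdd_sub : BddAbove (Set.range fun v => max (A v - L * u v) 0) :=
    bddAbove_range_max_zero fun v => (abs_sub _ _).trans (add_le_add (hA v) (hLu v))
  exact ciSup_add_ciSup_le fun v v' => max_add_max_le_of_lipschitzWith hφ hφ0
    (le_ciSup hbdd_add v) (le_ciSup hbdd_add v') (le_ciSup hbdd_sub v) (le_ciSup hbdd_sub v')

-- The `max · 0` adjoins the origin as an index that `φ 0 = 0` leaves fixed; this is what lets
-- one coordinate be replaced at a time, and `|X| = max X 0 + max (-X) 0` recovers `sup |X|`.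
def signedPosSup (y : ι → Fin m → ℝ) (b : Fin m → Bool) : ℝ :=
  ⨆ v, max (signedSum b (y v)) 0

lemma sum_signedPosSup_le_update [Nonempty ι] {x : ι → Fin m → ℝ} {M : ℝ}
    (hx : ∀ v i, |x v i| ≤ M) {L : ℝ≥0} {ψ : Fin m → ℝ → ℝ}
    (hψ : ∀ i, LipschitzWith L (ψ i) ∧ ψ i 0 = 0) (j : Fin m) :
    ∑ b, signedPosSup (fun v i => ψ i (x v i)) b ≤
      ∑ b, signedPosSup (fun v i => Function.update ψ j (fun t => L * t) i (x v i)) b := by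
  have hpair : ∀ G : (Fin m → Bool) → ℝ,
      ∑ b, G b = (∑ b, (G (Function.update b j true) + G (Function.update b j false))) / 2 :=
    fun G => by rw [sum_update_true_add_update_false]; ring
  rw [hpair fun b => signedPosSup _ b,
    hpair fun b => signedPosSup (fun v i => Function.update ψ j _ i (x v i)) b]
  refine div_le_div_of_nonneg_right (Finset.sum_le_sum fun b _ => ?_) zero_le_two
  set A : ι → ℝ := fun v => signedSum b (Function.update (fun i => ψ i (x v i)) j 0)
  have hsplit : ∀ (ψ' : Fin m → ℝ → ℝ), (∀ i ≠ j, ψ' i = ψ i) → ∀ c,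
      signedPosSup (fun v i => ψ' i (x v i)) (Function.update b j c) =
        ⨆ v, max (A v + boolSign c * ψ' j (x v j)) 0 := by
    intro ψ' hψ' c
    refine iSup_congr fun v => ?_
    rw [signedSum_update]
    congr 3
    ext i
    rcases eq_or_ne i j with rfl | hij
    · simp
    · simp [Function.update_of_ne hij, hψ' i hij]
  rw [hsplit ψ (fun _ _ => rfl), hsplit ψ (fun _ _ => rfl),
    hsplit _ (fun i hij => Function.update_of_ne hij _ _),
    hsplit _ (fun i hij => Function.update_of_ne hij _ _)]
  have hA : ∀ v, |A v| ≤ m * (L * M) := fun v => abs_signedSum_le b fun i => by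
    rcases eq_or_ne i j with rfl | hij
    · simpa using mul_nonneg L.2 ((abs_nonneg _).trans (hx v i))
    · simpa [Function.update_of_ne hij] using
        (abs_le_mul_abs_of_lipschitzWith (hψ i).1 (hψ i).2 _).trans
          (mul_le_mul_of_nonneg_left (hx v i) L.2)
  simpa [← sub_eq_add_neg] using
    iSup_max_add_iSup_max_le (hψ j).1 (hψ j).2 hA (fun v => hx v j)

lemma sum_signedPosSup_comp_le [Nonempty ι] {x : ι → Fin m → ℝ} {M : ℝ}
    (hx : ∀ v i, |x v i| ≤ M) {L : ℝ≥0} {φ : ℝ → ℝ} (hφ : LipschitzWith L φ) (hφ0 : φ 0 = 0) :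
    ∑ b, signedPosSup (fun v i => φ (x v i)) b ≤
      ∑ b, signedPosSup (fun v i => L * x v i) b := by
  classical
  let ψ : Finset (Fin m) → Fin m → ℝ → ℝ := fun J i => if i ∈ J then (fun t => L * t) else φ
  have hψ : ∀ J i, LipschitzWith L (ψ J i) ∧ ψ J i 0 = 0 := fun J i => by
    by_cases hi : i ∈ J <;> simp [ψ, hi, hφ, hφ0, lipschitzWith_const_mul]
  have hmix : ∀ J, ∑ b, signedPosSup (fun v i => φ (x v i)) b ≤
      ∑ b, signedPosSup (fun v i => ψ J i (x v i)) b := by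
    intro J
    induction J using Finset.induction_on with
    | empty => simp [ψ]
    | insert j J hj ih =>
      have hupd : ψ (insert j J) = Function.update (ψ J) j fun t => L * t := by
        ext i : 1
        rcases eq_or_ne i j with rfl | hij <;> simp [ψ, Function.update_of_ne, *]
      rw [hupd]
      exact ih.trans (sum_signedPosSup_le_update hx (hψ J) j)
  simpa [ψ] using hmix Finset.univ

lemma iSup_abs_signedSum_le_signedPosSup_add [Nonempty ι] {y : ι → Fin m → ℝ} {C : ℝ}
    (hy : ∀ v i, |y v i| ≤ C) (b : Fin m → Bool) :
    ⨆ v, |signedSum b (y v)| ≤ signedPosSup y b + signedPosSup y (fun i => !b i) := by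
  have hbdd : ∀ b', BddAbove (Set.range fun v => max (signedSum b' (y v)) 0) :=
    fun b' => bddAbove_range_max_zero fun v => abs_signedSum_le b' (hy v)
  refine ciSup_le fun v => ?_
  rw [← max_zero_add_max_neg_zero_eq_abs_self, ← signedSum_not]
  exact add_le_add (le_ciSup (hbdd b) v) (le_ciSup (hbdd _) v)

lemma signedPosSup_const_mul_le {x : ι → Fin m → ℝ} {M : ℝ} (hx : ∀ v i, |x v i| ≤ M)
    (L : ℝ≥0) (b : Fin m → Bool) :
    signedPosSup (fun v i => L * x v i) b ≤ L * ⨆ v, |signedSum b (x v)| := by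
  have hbdd : BddAbove (Set.range fun v => L * |signedSum b (x v)|) :=
    ⟨L * (m * M), by
      rintro _ ⟨v, rfl⟩; exact mul_le_mul_of_nonneg_left (abs_signedSum_le b (hx v)) L.2⟩
  rw [Real.mul_iSup_of_nonneg L.coe_nonneg]
  refine Real.iSup_le (fun v => ?_) (Real.iSup_nonneg fun v => by positivity)
  have hv : signedSum b (fun i => L * x v i) = L * signedSum b (x v) := by
    simp only [signedSum, Finset.mul_sum]
    exact Finset.sum_congr rfl fun i _ => by ring
  refine max_le ((le_abs_self _).trans ?_) (Real.iSup_nonneg fun v => by positivity)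
  rw [hv, abs_mul, NNReal.abs_eq]
  exact le_ciSup hbdd v

theorem sum_iSup_abs_signedSum_comp_le {x : ι → Fin m → ℝ} {M : ℝ} (hx : ∀ v i, |x v i| ≤ M)
    {L : ℝ≥0} {φ : ℝ → ℝ} (hφ : LipschitzWith L φ) (hφ0 : φ 0 = 0) :
    ∑ b, ⨆ v, |signedSum b fun i => φ (x v i)| ≤ 2 * L * ∑ b, ⨆ v, |signedSum b (x v)| := by
  rcases isEmpty_or_nonempty ι with hι | hι
  · simp [Real.iSup_of_isEmpty]
  have hφx : ∀ v i, |φ (x v i)| ≤ L * M := fun v i =>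
    (abs_le_mul_abs_of_lipschitzWith hφ hφ0 _).trans (mul_le_mul_of_nonneg_left (hx v i) L.2)
  have hnot : ∑ b : Fin m → Bool, signedPosSup (fun v i => φ (x v i)) (fun i => !b i) =
      ∑ b, signedPosSup (fun v i => φ (x v i)) b :=
    Equiv.sum_comp (Equiv.piCongrRight fun _ => Equiv.boolNot) _
  calc ∑ b, ⨆ v, |signedSum b fun i => φ (x v i)|
      ≤ ∑ b, (signedPosSup (fun v i => φ (x v i)) b +
          signedPosSup (fun v i => φ (x v i)) (fun i => !b i)) :=
        Finset.sum_le_sum fun b _ => iSup_abs_signedSum_le_signedPosSup_add hφx b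
    _ = 2 * ∑ b, signedPosSup (fun v i => φ (x v i)) b := by
      rw [Finset.sum_add_distrib, hnot, two_mul]
    _ ≤ 2 * ∑ b, signedPosSup (fun v i => L * x v i) b :=
      mul_le_mul_of_nonneg_left (sum_signedPosSup_comp_le hx hφ hφ0) zero_le_two
    _ ≤ 2 * ∑ b, L * ⨆ v, |signedSum b (x v)| := by
      gcongr with b; exact signedPosSup_const_mul_le hx L b
    _ = 2 * L * ∑ b, ⨆ v, |signedSum b (x v)| := by
      rw [← Finset.mul_sum, mul_assoc]

end Contraction

section Euclidean

open Matrix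

variable {n d : ℕ}

lemma euclNormSq_nonneg (x : Fin n → ℝ) : 0 ≤ euclNormSq x :=
  Finset.sum_nonneg fun _ _ => sq_nonneg _

lemma euclNormSq_eq_dotProduct (x : Fin n → ℝ) : euclNormSq x = x ⬝ᵥ x := by
  simp [euclNormSq, dotProduct, sq]

lemma sq_euclNorm (x : Fin n → ℝ) : euclNorm x ^ 2 = euclNormSq x :=
  Real.sq_sqrt (euclNormSq_nonneg x)

lemma abs_dotp_le (x y : Fin n → ℝ) : |dotp x y| ≤ euclNorm x * euclNorm y := by
  rw [euclNorm, euclNorm, ← Real.sqrt_mul (euclNormSq_nonneg x)]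
  exact Real.abs_le_sqrt (Finset.sum_mul_sq_le_sq_mul_sq _ x y)

lemma abs_le_euclNorm (x : Fin n → ℝ) (i : Fin n) : |x i| ≤ euclNorm x :=
  Real.abs_le_sqrt (Finset.single_le_sum (f := fun j => x j ^ 2) (fun _ _ => sq_nonneg _)
    (Finset.mem_univ i))

lemma continuous_euclNorm : Continuous (euclNorm : (Fin n → ℝ) → ℝ) := by
  unfold euclNorm euclNormSq; fun_prop

lemma euclNormSq_mulVec {U : Matrix (Fin n) (Fin d) ℝ} (hU : U.transpose * U = 1)
    (z : Fin d → ℝ) : euclNormSq (U *ᵥ z) = euclNormSq z := by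
  rw [euclNormSq_eq_dotProduct, euclNormSq_eq_dotProduct, Matrix.dotProduct_mulVec,
    Matrix.vecMul_mulVec, hU, Matrix.vecMul_one]

lemma dotp_mulVec (U : Matrix (Fin n) (Fin d) ℝ) (x : Fin n → ℝ) (z : Fin d → ℝ) :
    dotp x (U *ᵥ z) = dotp (x ᵥ* U) z :=
  Matrix.dotProduct_mulVec x U z

lemma isCompact_unitSphere_range_mulVec (U : Matrix (Fin n) (Fin d) ℝ) :
    IsCompact {v : Fin n → ℝ | (∃ z, v = U *ᵥ z) ∧ euclNorm v = 1} := by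
  have hrange : {v : Fin n → ℝ | ∃ z, v = U *ᵥ z} = (LinearMap.range U.mulVecLin : Set _) := by
    ext v; simp [eq_comm]
  refine Metric.isCompact_of_isClosed_isBounded ?_ ?_
  · exact (hrange ▸ Submodule.closed_of_finiteDimensional _).inter
      (isClosed_eq continuous_euclNorm continuous_const)
  · refine (Metric.isBounded_closedBall (x := 0) (r := 1)).subset fun v hv => ?_
    rw [mem_closedBall_zero_iff, pi_norm_le_iff_of_nonneg zero_le_one]
    exact fun i => hv.2 ▸ abs_le_euclNorm v i

lemma exists_dotp_eq_dotp_vecMul {U : Matrix (Fin n) (Fin d) ℝ} (hU : U.transpose * U = 1)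
    {v : Fin n → ℝ} (hv : (∃ z, v = U *ᵥ z) ∧ euclNorm v = 1) :
    ∃ z, euclNorm z = 1 ∧ ∀ y, dotp y v = dotp (y ᵥ* U) z := by
  obtain ⟨⟨z, rfl⟩, hz⟩ := hv
  rw [euclNorm, euclNormSq_mulVec hU] at hz
  exact ⟨z, hz, fun y => dotp_mulVec U y z⟩

lemma abs_dotp_le_euclNorm_vecMul {U : Matrix (Fin n) (Fin d) ℝ} (hU : U.transpose * U = 1)
    (y : Fin n → ℝ) {v : Fin n → ℝ} (hv : (∃ z, v = U *ᵥ z) ∧ euclNorm v = 1) :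
    |dotp y v| ≤ euclNorm (y ᵥ* U) := by
  obtain ⟨z, hz, h⟩ := exists_dotp_eq_dotp_vecMul hU hv
  simpa [h, hz] using abs_dotp_le (y ᵥ* U) z

end Euclidean

section SignedVectorSums

open Matrix

variable {m d : ℕ}

lemma signedSum_dotp (b : Fin m → Bool) (w : Fin m → Fin d → ℝ) (z : Fin d → ℝ) :
    signedSum b (fun i => dotp (w i) z) = dotp (fun j => signedSum b fun i => w i j) z := by
  simp only [signedSum, dotp, Finset.mul_sum, Finset.sum_mul]
  rw [Finset.sum_comm]
  exact Finset.sum_congr rfl fun _ _ => Finset.sum_congr rfl fun _ _ => by ring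

-- Cauchy–Schwarz over the `2 ^ m` sign patterns, then `sum_signedSum_sq` in each coordinate.
lemma sum_euclNorm_signedSum_le (w : Fin m → Fin d → ℝ) :
    ∑ b, euclNorm (fun j => signedSum b fun i => w i j) ≤
      2 ^ m * Real.sqrt (∑ i, euclNormSq (w i)) := by
  have hsq : ∑ b : Fin m → Bool, euclNorm (fun j => signedSum b fun i => w i j) ^ 2 =
      2 ^ m * ∑ i, euclNormSq (w i) := by
    simp only [sq_euclNorm, euclNormSq]
    rw [Finset.sum_comm]
    simp only [sum_signedSum_sq, ← Finset.mul_sum]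
    rw [Finset.sum_comm]
  calc ∑ b, euclNorm (fun j => signedSum b fun i => w i j)
      = ∑ b : Fin m → Bool, 1 * euclNorm (fun j => signedSum b fun i => w i j) := by simp
    _ ≤ Real.sqrt (∑ _b : Fin m → Bool, 1 ^ 2) *
        Real.sqrt (∑ b : Fin m → Bool, euclNorm (fun j => signedSum b fun i => w i j) ^ 2) :=
      Real.sum_mul_le_sqrt_mul_sqrt _ _ _
    _ = 2 ^ m * Real.sqrt (∑ i, euclNormSq (w i)) := by
      rw [hsq, Real.sqrt_mul (by positivity), ← mul_assoc, ← Real.sqrt_mul (by positivity)]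
      have h2m : Real.sqrt ((2 : ℝ) ^ m * 2 ^ m) = 2 ^ m := Real.sqrt_mul_self (by positivity)
      simp [h2m]

lemma abs_signedSum_dotp_le_euclNorm {n : ℕ} {U : Matrix (Fin n) (Fin d) ℝ}
    (hU : U.transpose * U = 1) (b : Fin m → Bool) (x : Fin m → Fin n → ℝ) {v : Fin n → ℝ}
    (hv : (∃ z, v = U *ᵥ z) ∧ euclNorm v = 1) :
    |signedSum b fun i => dotp (x i) v| ≤
      euclNorm fun j => signedSum b fun i => (x i ᵥ* U) j := by
  obtain ⟨z, hz, h⟩ := exists_dotp_eq_dotp_vecMul hU hv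
  simp_rw [h, signedSum_dotp]
  simpa [hz] using abs_dotp_le _ z

end SignedVectorSums

section TruncatedQuadratic

variable {τ : ℝ}

lemma phiTrunc_eq_sq_clamp (hτ : 0 ≤ τ) (u : ℝ) : phiTrunc τ u = max (min u τ) (-τ) ^ 2 := by
  unfold phiTrunc
  split_ifs with h
  · rw [min_eq_left (abs_le.1 h).2, max_eq_left (abs_le.1 h).1]
  · rcases le_total u 0 with hu | hu
    · rw [abs_of_nonpos hu] at h
      rw [min_eq_left (by linarith), max_eq_right (by linarith), neg_sq]
    · rw [abs_of_nonneg hu] at h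
      rw [min_eq_right (by linarith), max_eq_left (by linarith)]

lemma phiTrunc_zero (hτ : 0 ≤ τ) : phiTrunc τ 0 = 0 := by simp [phiTrunc, hτ]

lemma abs_phiTrunc_le (u : ℝ) : |phiTrunc τ u| ≤ τ ^ 2 := by
  unfold phiTrunc
  split_ifs with h
  · simpa [abs_of_nonneg (sq_nonneg u)] using pow_le_pow_left₀ (abs_nonneg u) h 2
  · simp

lemma continuous_phiTrunc (hτ : 0 ≤ τ) : Continuous (phiTrunc τ) := by
  simp_rw [funext (phiTrunc_eq_sq_clamp hτ)]; fun_prop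

-- `φ_τ` is the square of the `1`-Lipschitz clamp to `[-τ, τ]`, and `|s² - t²| = |s - t| |s + t|`.
lemma lipschitzWith_phiTrunc (hτ : 0 ≤ τ) :
    LipschitzWith (Real.toNNReal (2 * τ)) (phiTrunc τ) := by
  refine LipschitzWith.of_dist_le_mul fun s t => ?_
  set c : ℝ → ℝ := fun u => max (min u τ) (-τ)
  have hc : ∀ u, |c u| ≤ τ := fun u =>
    abs_le.2 ⟨le_max_right _ _, max_le (min_le_right _ _) (by linarith)⟩
  have hlip : |c s - c t| ≤ |s - t| :=
    (abs_max_sub_max_le_abs _ _ _).trans ((abs_min_sub_min_le_max _ _ _ _).trans (by simp))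
  rw [Real.dist_eq, Real.dist_eq, phiTrunc_eq_sq_clamp hτ, phiTrunc_eq_sq_clamp hτ,
    Real.coe_toNNReal _ (by positivity), sq_sub_sq, abs_mul]
  exact mul_le_mul ((abs_add_le _ _).trans (by linarith [hc s, hc t])) hlip (abs_nonneg _)
    (by positivity)

end TruncatedQuadratic

section TruncatedProcess

open Matrix

variable {n m : ℕ} {τ : ℝ}

def truncProcessTerm (τ : ℝ) (s : Fin m → ℝ) (x : Fin m → Fin n → ℝ) (v : Fin n → ℝ) : ℝ :=
  |(1 / (m : ℝ)) * ∑ i, s i * phiTrunc τ (dotp (x i) v)|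

def truncProcessSup (S : Set (Fin n → ℝ)) (τ : ℝ) (x : Fin m → Fin n → ℝ) (s : Fin m → ℝ) : ℝ :=
  ⨆ v : S, truncProcessTerm τ s x v

lemma truncProcessSup_nonneg (S : Set (Fin n → ℝ)) (τ : ℝ) (x : Fin m → Fin n → ℝ)
    (s : Fin m → ℝ) : 0 ≤ truncProcessSup S τ x s :=
  Real.iSup_nonneg fun _ => abs_nonneg _

lemma continuous_truncProcessTerm (hτ : 0 ≤ τ) (s : Fin m → ℝ) :
    Continuous fun p : (Fin m → Fin n → ℝ) × (Fin n → ℝ) => truncProcessTerm τ s p.1 p.2 := by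
  have hdot : ∀ i, Continuous fun p : (Fin m → Fin n → ℝ) × (Fin n → ℝ) => dotp (p.1 i) p.2 := by
    unfold dotp; fun_prop
  exact (continuous_const.mul (continuous_finsetSum _ fun i _ =>
    continuous_const.mul ((continuous_phiTrunc hτ).comp (hdot i)))).abs

lemma biSup_eq_truncProcessSup {S : Set (Fin n → ℝ)} (hS : IsCompact S) (hτ : 0 ≤ τ)
    (x : Fin m → Fin n → ℝ) (s : Fin m → ℝ) :
    ⨆ v ∈ S, truncProcessTerm τ s x v = truncProcessSup S τ x s := by
  have hbdd := hS.bddAbove_image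
    ((continuous_truncProcessTerm hτ s).comp (Continuous.prodMk_right x)).continuousOn
  rw [Set.image_eq_range] at hbdd
  refine (ciSup_subtype hbdd ?_).symm
  exact Real.sSup_empty.trans_le (truncProcessSup_nonneg S τ x s)

lemma measurable_truncProcessSup {S : Set (Fin n → ℝ)} (hS : IsCompact S) (hτ : 0 ≤ τ)
    (s : Fin m → ℝ) : Measurable fun x : Fin m → Fin n → ℝ => truncProcessSup S τ x s := by
  simpa only [sSup_image', truncProcessSup] using
    (hS.continuous_sSup (f := truncProcessTerm τ s) (continuous_truncProcessTerm hτ s)).measurable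

lemma abs_truncProcessSup_boolSign_le (S : Set (Fin n → ℝ)) (x : Fin m → Fin n → ℝ)
    (b : Fin m → Bool) :
    |truncProcessSup S τ x (fun i => boolSign (b i))| ≤ 1 / (m : ℝ) * (m * τ ^ 2) := by
  rw [abs_of_nonneg (truncProcessSup_nonneg S τ x _)]
  refine Real.iSup_le (fun v => ?_) (by positivity)
  rw [truncProcessTerm, abs_mul, abs_of_nonneg (by positivity)]
  exact mul_le_mul_of_nonneg_left (abs_signedSum_le b fun i => abs_phiTrunc_le _) (by positivity)

lemma avg_truncProcessSup_boolSign_le {k : ℕ} {U : Matrix (Fin n) (Fin k) ℝ}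
    (hU : U.transpose * U = 1) (hτ : 0 ≤ τ) (x : Fin m → Fin n → ℝ) :
    (1 / 2) ^ m * ∑ b : Fin m → Bool,
        truncProcessSup {v : Fin n → ℝ | (∃ z, v = U *ᵥ z) ∧ euclNorm v = 1} τ x
          (fun i => boolSign (b i)) ≤
      4 * τ / m * Real.sqrt (∑ i, euclNormSq (x i ᵥ* U)) := by
  set S := {v : Fin n → ℝ | (∃ z, v = U *ᵥ z) ∧ euclNorm v = 1}
  have hx : ∀ (v : S) i, |dotp (x i) v| ≤ ∑ i', euclNorm (x i' ᵥ* U) := fun v i =>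
    (abs_dotp_le_euclNorm_vecMul hU (x i) v.2).trans <|
      Finset.single_le_sum (f := fun i' => euclNorm (x i' ᵥ* U)) (fun _ _ => Real.sqrt_nonneg _)
        (Finset.mem_univ i)
  have hlin : ∀ b : Fin m → Bool, ⨆ v : S, |signedSum b fun i => dotp (x i) v| ≤
      euclNorm fun j => signedSum b fun i => (x i ᵥ* U) j := fun b =>
    Real.iSup_le (fun v => abs_signedSum_dotp_le_euclNorm hU b x v.2) (Real.sqrt_nonneg _)
  have hscale : ∀ b : Fin m → Bool, truncProcessSup S τ x (fun i => boolSign (b i)) =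
      1 / (m : ℝ) * ⨆ v : S, |signedSum b fun i => phiTrunc τ (dotp (x i) v)| := by
    intro b
    rw [truncProcessSup, Real.mul_iSup_of_nonneg (by positivity)]
    exact iSup_congr fun v => by rw [truncProcessTerm, abs_mul, abs_of_nonneg (by positivity)]; rfl
  have hcontr := sum_iSup_abs_signedSum_comp_le (x := fun (v : S) i => dotp (x i) v) hx
    (lipschitzWith_phiTrunc hτ) (phiTrunc_zero hτ)
  rw [Real.coe_toNNReal _ (by positivity)] at hcontr
  have hhalf : (1 / 2 : ℝ) ^ m * 2 ^ m = 1 := by rw [← mul_pow]; norm_num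
  calc (1 / 2) ^ m * ∑ b : Fin m → Bool, truncProcessSup S τ x (fun i => boolSign (b i))
      = (1 / 2) ^ m * (1 / (m : ℝ) * ∑ b : Fin m → Bool, ⨆ v : S,
          |signedSum b fun i => phiTrunc τ (dotp (x i) v)|) := by
        simp_rw [hscale, Finset.mul_sum]
    _ ≤ (1 / 2) ^ m * (1 / (m : ℝ) * (2 * (2 * τ) * ∑ b : Fin m → Bool,
          euclNorm fun j => signedSum b fun i => (x i ᵥ* U) j)) := by
        gcongr
        exact hcontr.trans (by gcongr with b; exact hlin b)
    _ ≤ (1 / 2) ^ m * (1 / (m : ℝ) * (2 * (2 * τ) *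
          (2 ^ m * Real.sqrt (∑ i, euclNormSq (x i ᵥ* U))))) := by
        gcongr; exact sum_euclNorm_signedSum_le _
    _ = 4 * τ / m * Real.sqrt (∑ i, euclNormSq (x i ᵥ* U)) := by
        linear_combination (4 * τ / m * Real.sqrt (∑ i, euclNormSq (x i ᵥ* U))) * hhalf

end TruncatedProcess

section Probability

variable {Ω : Type*} [MeasurableSpace Ω] {μ : Measure Ω}

lemma integral_comp_eq_sum_of_indepFun {α β κ : Type*} [MeasurableSpace α] [MeasurableSpace β]
    [MeasurableSingletonClass β] [Fintype κ] {X : Ω → α} {Y : Ω → β} (hY : Measurable Y)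
    (hXY : IndepFun X Y μ) {s : κ → β} (hs : Function.Injective s)
    (hYs : ∀ᵐ ω ∂μ, Y ω ∈ Set.range s) {F : α → β → ℝ} (hF : ∀ k, Measurable fun x => F x (s k))
    (hX : AEMeasurable X μ) (hFi : ∀ k, Integrable (fun ω => F (X ω) (s k)) μ) :
    ∫ ω, F (X ω) (Y ω) ∂μ = ∑ k, μ.real (Y ⁻¹' {s k}) * ∫ ω, F (X ω) (s k) ∂μ := by
  classical
  have hsplit : (fun ω => F (X ω) (Y ω)) =ᵐ[μ]
      fun ω => ∑ k, F (X ω) (s k) * ({s k} : Set β).indicator 1 (Y ω) := by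
    filter_upwards [hYs] with ω ⟨k₀, hk₀⟩
    simp [← hk₀, Set.indicator_apply, hs.eq_iff]
  have hind : ∀ k, Measurable (({s k} : Set β).indicator (1 : β → ℝ)) := fun k =>
    measurable_const.indicator (measurableSet_singleton _)
  have hterm : ∀ k, ∫ ω, F (X ω) (s k) * ({s k} : Set β).indicator 1 (Y ω) ∂μ =
      μ.real (Y ⁻¹' {s k}) * ∫ ω, F (X ω) (s k) ∂μ := by
    intro k
    have h := (hXY.comp (hF k) (hind k)).integral_fun_mul_eq_mul_integral
      ((hF k).comp_aemeasurable hX).aestronglyMeasurable ((hind k).comp hY).aestronglyMeasurable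
    simp only [Function.comp_apply] at h
    rw [h, mul_comm]
    congr 1
    simp_rw [← Set.indicator_comp_right]
    exact integral_indicator_one (hY (measurableSet_singleton _))
  rw [integral_congr_ae hsplit, integral_finsetSum]
  · exact Finset.sum_congr rfl fun k _ => hterm k
  · refine fun k _ => (hFi k).mul_bdd ((hind k).comp hY).aestronglyMeasurable (c := 1) ?_
    exact ae_of_all _ fun ω => (norm_indicator_le_norm_self 1 _).trans (by simp)

section Rademacher

variable {m : ℕ} {ε : Fin m → Ω → ℝ}

lemma ae_mem_range_boolSign [IsProbabilityMeasure μ] (hε : ∀ i, Measurable (ε i))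
    (hrad : ∀ i, μ {ω | ε i ω = 1} = 1 / 2 ∧ μ {ω | ε i ω = -1} = 1 / 2) :
    ∀ᵐ ω ∂μ, (fun i => ε i ω) ∈ Set.range fun (b : Fin m → Bool) i => boolSign (b i) := by
  have hsign : ∀ i, ∀ᵐ ω ∂μ, ε i ω = 1 ∨ ε i ω = -1 := by
    intro i
    have hmeas : ∀ c : ℝ, MeasurableSet {ω | ε i ω = c} := fun c =>
      hε i (measurableSet_singleton c)
    have hdisj : Disjoint {ω | ε i ω = 1} {ω | ε i ω = -1} :=
      Set.disjoint_left.2 fun ω (h1 : ε i ω = 1) (h2 : ε i ω = -1) => by linarith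
    rw [ae_iff_measure_eq (p := fun ω => ε i ω = 1 ∨ ε i ω = -1)
      (by simpa only [Set.ofPred_or] using ((hmeas 1).union (hmeas (-1))).nullMeasurableSet),
      Set.ofPred_or, measure_union hdisj (hmeas (-1)), (hrad i).1, (hrad i).2,
      ENNReal.add_halves, measure_univ]
  filter_upwards [ae_all_iff.2 hsign] with ω hω
  refine ⟨fun i => decide (ε i ω = 1), funext fun i => ?_⟩
  rcases hω i with h | h <;> norm_num [h, boolSign]

lemma measureReal_preimage_boolSign (hε : iIndepFun ε μ)
    (hrad : ∀ i, μ {ω | ε i ω = 1} = 1 / 2 ∧ μ {ω | ε i ω = -1} = 1 / 2) (b : Fin m → Bool) :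
    μ.real ((fun ω i => ε i ω) ⁻¹' {fun i => boolSign (b i)}) = (1 / 2) ^ m := by
  have hinter : (fun ω i => ε i ω) ⁻¹' {fun i => boolSign (b i)} =
      ⋂ i, ε i ⁻¹' {boolSign (b i)} := by
    ext ω; simp [funext_iff]
  have hhalf : ∀ i, μ (ε i ⁻¹' {boolSign (b i)}) = 1 / 2 := fun i => by
    cases b i
    · exact (hrad i).2
    · exact (hrad i).1
  rw [measureReal_def, hinter,
    hε.meas_iInter fun i => ⟨{boolSign (b i)}, measurableSet_singleton _, rfl⟩]
  simp [hhalf, ENNReal.toReal_pow]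

lemma integral_comp_eq_avg_boolSign [IsProbabilityMeasure μ] {α : Type*} [MeasurableSpace α]
    {X : Ω → α} (hX : AEMeasurable X μ) (hεm : ∀ i, Measurable (ε i)) (hε : iIndepFun ε μ)
    (hrad : ∀ i, μ {ω | ε i ω = 1} = 1 / 2 ∧ μ {ω | ε i ω = -1} = 1 / 2)
    (hXε : IndepFun X (fun ω i => ε i ω) μ) {F : α → (Fin m → ℝ) → ℝ}
    (hF : ∀ b : Fin m → Bool, Measurable fun x => F x fun i => boolSign (b i))
    (hFi : ∀ b : Fin m → Bool, Integrable (fun ω => F (X ω) fun i => boolSign (b i)) μ) :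
    ∫ ω, F (X ω) (fun i => ε i ω) ∂μ =
      (1 / 2) ^ m * ∑ b : Fin m → Bool, ∫ ω, F (X ω) (fun i => boolSign (b i)) ∂μ := by
  have hinj : Function.Injective fun (b : Fin m → Bool) i => boolSign (b i) :=
    fun b c h => funext fun i => boolSign_injective (congrFun h i)
  rw [integral_comp_eq_sum_of_indepFun (measurable_pi_lambda _ hεm) hXε hinj
    (ae_mem_range_boolSign hεm hrad) hF hX hFi, Finset.mul_sum]
  simp_rw [measureReal_preimage_boolSign hε hrad]

lemma integral_truncProcessSup_eq_avg [IsProbabilityMeasure μ] {n : ℕ} {S : Set (Fin n → ℝ)}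
    (hS : IsCompact S) {τ : ℝ} (hτ : 0 ≤ τ) {a : Fin m → Ω → Fin n → ℝ}
    (ha : AEMeasurable (fun ω i => a i ω) μ) (hεm : ∀ i, Measurable (ε i)) (hε : iIndepFun ε μ)
    (hrad : ∀ i, μ {ω | ε i ω = 1} = 1 / 2 ∧ μ {ω | ε i ω = -1} = 1 / 2)
    (haε : IndepFun (fun ω i => a i ω) (fun ω i => ε i ω) μ) :
    ∫ ω, truncProcessSup S τ (fun i => a i ω) (fun i => ε i ω) ∂μ =
      ∫ ω, (1 / 2) ^ m * ∑ b : Fin m → Bool,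
        truncProcessSup S τ (fun i => a i ω) (fun i => boolSign (b i)) ∂μ := by
  have hF : ∀ b : Fin m → Bool, Measurable fun x => truncProcessSup S τ x fun i => boolSign (b i) :=
    fun b => measurable_truncProcessSup hS hτ _
  have hFi : ∀ b : Fin m → Bool,
      Integrable (fun ω => truncProcessSup S τ (fun i => a i ω) fun i => boolSign (b i)) μ :=
    fun b => Integrable.of_bound ((hF b).comp_aemeasurable ha).aestronglyMeasurable _
      (ae_of_all _ fun ω => abs_truncProcessSup_boolSign_le S _ b)
  rw [integral_comp_eq_avg_boolSign ha hεm hε hrad haε hF hFi, integral_const_mul,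
    integral_finsetSum _ fun b _ => hFi b]

end Rademacher

end Probability

section SecondMoments

open Matrix

variable {Ω : Type*} [MeasurableSpace Ω] {μ : Measure Ω} {n : ℕ}

lemma IsIsotropic.integrable_mul {a : Ω → Fin n → ℝ} (hiso : IsIsotropic μ a)
    (ha : AEMeasurable a μ) (p q : Fin n) : Integrable (fun ω => a ω p * a ω q) μ := by
  have hL2 : ∀ p, MemLp (fun ω => a ω p) 2 μ := fun p => by
    refine (memLp_two_iff_integrable_sq
      ((measurable_pi_apply p).comp_aemeasurable ha).aestronglyMeasurable).2 ?_
    simp_rw [sq]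
    exact Integrable.of_integral_ne_zero (by simp [hiso p p])
  exact (hL2 p).integrable_mul (hL2 q)

lemma IsIsotropic.integrable_dotp_sq {a : Ω → Fin n → ℝ} (hiso : IsIsotropic μ a)
    (ha : AEMeasurable a μ) (u : Fin n → ℝ) :
    Integrable (fun ω => dotp (a ω) u ^ 2) μ ∧ ∫ ω, dotp (a ω) u ^ 2 ∂μ = euclNormSq u := by
  have hexp : ∀ ω, dotp (a ω) u ^ 2 = ∑ p, ∑ q, u p * u q * (a ω p * a ω q) := fun ω => by
    rw [dotp, sq, Finset.sum_mul_sum]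
    exact Finset.sum_congr rfl fun _ _ => Finset.sum_congr rfl fun _ _ => by ring
  have hint : ∀ p q, Integrable (fun ω => u p * u q * (a ω p * a ω q)) μ := fun p q =>
    (hiso.integrable_mul ha p q).const_mul _
  simp_rw [hexp]
  refine ⟨integrable_finsetSum _ fun p _ => integrable_finsetSum _ fun q _ => hint p q, ?_⟩
  rw [integral_finsetSum _ fun p _ => integrable_finsetSum _ fun q _ => hint p q]
  simp_rw [integral_finsetSum _ fun q _ => hint _ q, integral_const_mul, hiso _ _]
  simp [euclNormSq, sq]

lemma integrable_sqrt {f : Ω → ℝ} [IsFiniteMeasure μ] (hf : Integrable f μ) (hf0 : ∀ ω, 0 ≤ f ω) :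
    Integrable (fun ω => Real.sqrt (f ω)) μ := by
  refine MemLp.integrable one_le_two ((memLp_two_iff_integrable_sq
    (Real.continuous_sqrt.comp_aestronglyMeasurable hf.aestronglyMeasurable)).2 ?_)
  simpa only [Real.sq_sqrt (hf0 _)] using hf

lemma integral_sqrt_le_sqrt_integral [IsProbabilityMeasure μ] {f : Ω → ℝ} (hf : Integrable f μ)
    (hf0 : ∀ ω, 0 ≤ f ω) : ∫ ω, Real.sqrt (f ω) ∂μ ≤ Real.sqrt (∫ ω, f ω ∂μ) :=
  Real.strictConcaveOn_sqrt.concaveOn.le_map_integral Real.continuous_sqrt.continuousOn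
    isClosed_Ici (ae_of_all _ hf0) hf (integrable_sqrt hf hf0)

lemma integral_euclNormSq_vecMul {k : ℕ} {U : Matrix (Fin n) (Fin k) ℝ} (hU : U.transpose * U = 1)
    {a : Ω → Fin n → ℝ} (hiso : IsIsotropic μ a) (ha : AEMeasurable a μ) :
    Integrable (fun ω => euclNormSq (a ω ᵥ* U)) μ ∧ ∫ ω, euclNormSq (a ω ᵥ* U) ∂μ = k := by
  have hcol : ∀ j, euclNormSq (fun p => U p j) = 1 := fun j => by
    simpa [euclNormSq, sq, Matrix.mul_apply] using congrFun (congrFun hU j) j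
  have h := fun j => hiso.integrable_dotp_sq ha fun p => U p j
  simp only [hcol] at h
  refine ⟨integrable_finsetSum _ fun j _ => (h j).1, ?_⟩
  change ∫ ω, ∑ j, dotp (a ω) (fun p => U p j) ^ 2 ∂μ = k
  simp [integral_finsetSum _ fun j _ => (h j).1, (h _).2]

lemma integral_sum_euclNormSq_vecMul {m k : ℕ} {U : Matrix (Fin n) (Fin k) ℝ}
    (hU : U.transpose * U = 1) {a : Fin m → Ω → Fin n → ℝ} {a₀ : Ω → Fin n → ℝ}
    (haid : ∀ i, IdentDistrib (a i) a₀ μ μ) (hiso : IsIsotropic μ a₀) :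
    Integrable (fun ω => ∑ i, euclNormSq (a i ω ᵥ* U)) μ ∧
      ∫ ω, ∑ i, euclNormSq (a i ω ᵥ* U) ∂μ = m * k := by
  have hmeas : Measurable fun x : Fin n → ℝ => euclNormSq (x ᵥ* U) := by
    unfold euclNormSq; fun_prop
  have hi : ∀ i, Integrable (fun ω => euclNormSq (a i ω ᵥ* U)) μ ∧
      ∫ ω, euclNormSq (a i ω ᵥ* U) ∂μ = k := fun i => by
    obtain ⟨hint, hval⟩ := integral_euclNormSq_vecMul hU hiso (haid i).aemeasurable_snd
    exact ⟨((haid i).comp hmeas).integrable_iff.2 hint,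
      ((haid i).comp hmeas).integral_eq.trans hval⟩
  exact ⟨integrable_finsetSum _ fun i _ => (hi i).1,
    by simp [integral_finsetSum _ fun i _ => (hi i).1, (hi _).2]⟩

end SecondMoments

lemma div_mul_sqrt_mul_eq_mul_sqrt_div (c K : ℝ) (m : ℕ) :
    c / m * Real.sqrt (m * K) = c * Real.sqrt (K / m) := by
  rcases Nat.eq_zero_or_pos m with rfl | hm
  · simp
  have hm' : (0 : ℝ) < m := Nat.cast_pos.2 hm
  rw [show (m : ℝ) * K = m ^ 2 * (K / m) by field_simp, Real.sqrt_mul (sq_nonneg _),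
    Real.sqrt_sq hm'.le]
  field_simp

theorem rademacher_process_truncated_quadratic_bound_general
    {Ω : Type*} [MeasurableSpace Ω] (μ : Measure Ω) [IsProbabilityMeasure μ]
    {n k m : ℕ} (τ : ℝ) (hτ : 0 < τ)
    (U : Matrix (Fin n) (Fin (2 * k)) ℝ) (hU : U.transpose * U = 1)
    (a : Fin m → Ω → Fin n → ℝ) (a₀ : Ω → Fin n → ℝ) (ε : Fin m → Ω → ℝ)
    (hemeas : ∀ i, Measurable (ε i))
    (haid : ∀ i, IdentDistrib (a i) a₀ μ μ)
    (hiso : IsIsotropic μ a₀)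
    (heindep : iIndepFun ε μ)
    (herad : ∀ i, μ {ω | ε i ω = 1} = 1/2 ∧ μ {ω | ε i ω = -1} = 1/2)
    (hae : IndepFun (fun ω i => a i ω) (fun ω i => ε i ω) μ) :
    ∫ ω, (⨆ v ∈ {v : Fin n → ℝ | (∃ z, v = U.mulVec z) ∧ euclNorm v = 1},
        |(1 / (m : ℝ)) * ∑ i, ε i ω * phiTrunc τ (dotp (a i ω) v)|) ∂μ ≤
      4 * τ * Real.sqrt (2 * (k : ℝ) / (m : ℝ)) := by
  set S := {v : Fin n → ℝ | (∃ z, v = U.mulVec z) ∧ euclNorm v = 1}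
  have hS : IsCompact S := isCompact_unitSphere_range_mulVec U
  obtain ⟨hint, hval⟩ := integral_sum_euclNormSq_vecMul hU haid hiso
  have hnonneg : ∀ ω, 0 ≤ ∑ i, euclNormSq (Matrix.vecMul (a i ω) U) := fun ω =>
    Finset.sum_nonneg fun i _ => euclNormSq_nonneg _
  calc ∫ ω, (⨆ v ∈ S, |(1 / (m : ℝ)) * ∑ i, ε i ω * phiTrunc τ (dotp (a i ω) v)|) ∂μ
      = ∫ ω, truncProcessSup S τ (fun i => a i ω) (fun i => ε i ω) ∂μ := by
        simp_rw [← biSup_eq_truncProcessSup hS hτ.le]; rfl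
    _ = ∫ ω, (1 / 2) ^ m * ∑ b : Fin m → Bool,
          truncProcessSup S τ (fun i => a i ω) (fun i => boolSign (b i)) ∂μ :=
        integral_truncProcessSup_eq_avg hS hτ.le
          (aemeasurable_pi_lambda _ fun i => (haid i).aemeasurable_fst) hemeas heindep herad hae
    _ ≤ ∫ ω, 4 * τ / m * Real.sqrt (∑ i, euclNormSq (Matrix.vecMul (a i ω) U)) ∂μ :=
        integral_mono_of_nonneg (ae_of_all _ fun ω => mul_nonneg (by positivity)
            (Finset.sum_nonneg fun b _ => truncProcessSup_nonneg _ _ _ _))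
          ((integrable_sqrt hint hnonneg).const_mul _)
          (ae_of_all _ fun ω => avg_truncProcessSup_boolSign_le hU hτ.le _)
    _ ≤ 4 * τ / m * Real.sqrt (m * (2 * k : ℕ)) := by
        rw [integral_const_mul, ← hval]
        gcongr
        exact integral_sqrt_le_sqrt_integral hint hnonneg
    _ = 4 * τ * Real.sqrt (2 * (k : ℝ) / (m : ℝ)) := by
        rw [div_mul_sqrt_mul_eq_mul_sqrt_div]; push_cast; rfl

/-- For `U ∈ ℝ^{n×2k}` with orthonormal columns,
`S = {Uz : ‖Uz‖ = 1}`, `τ > 0`, i.i.d. copies `a₁,…,a_m` of an isotropic random vector and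
i.i.d. Rademacher signs `ε₁,…,ε_m` independent of the `a_i`:
`E[sup_{v ∈ S} |(1/m) ∑ᵢ εᵢ φ_τ(⟨aᵢ, v⟩)|] ≤ 4τ√(2k/m)`. -/
theorem rademacher_process_truncated_quadratic_bound
    {Ω : Type*} [MeasurableSpace Ω] (μ : Measure Ω) [IsProbabilityMeasure μ]
    {n k m : ℕ} (τ : ℝ) (hτ : 0 < τ)
    (U : Matrix (Fin n) (Fin (2 * k)) ℝ) (hU : U.transpose * U = 1)
    (a : Fin m → Ω → Fin n → ℝ) (a₀ : Ω → Fin n → ℝ) (ε : Fin m → Ω → ℝ)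
    (hameas : ∀ i, Measurable (a i)) (hemeas : ∀ i, Measurable (ε i))
    (haindep : iIndepFun a μ)
    (haid : ∀ i, IdentDistrib (a i) a₀ μ μ)
    (hiso : IsIsotropic μ a₀)
    (heindep : iIndepFun ε μ)
    (herad : ∀ i, μ {ω | ε i ω = 1} = 1/2 ∧ μ {ω | ε i ω = -1} = 1/2)
    (hae : IndepFun (fun ω i => a i ω) (fun ω i => ε i ω) μ) :
    ∫ ω, (⨆ v ∈ {v : Fin n → ℝ | (∃ z, v = U.mulVec z) ∧ euclNorm v = 1},
        |(1 / (m : ℝ)) * ∑ i, ε i ω * phiTrunc τ (dotp (a i ω) v)|) ∂μ ≤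
      4 * τ * Real.sqrt (2 * (k : ℝ) / (m : ℝ)) :=
  rademacher_process_truncated_quadratic_bound_general μ τ hτ U hU a a₀ ε hemeas haid hiso heindep
    herad hae

end
end

section
/- Let G : ℝ^k → ℝ^n be any function, fix z* ∈ ℝ^k, and suppose y = A G(z*) + η where A ∈ ℝ^{m×n} is any random matrix and η ∈ ℝ^m has i.i.d. entries with mean zero and variance σ², independent of A. Partition [m] into M batches B₁,…,B_M each of size b = m/M, and define ℓ_j(z) = (1/b)·‖A_{B_j}G(z) − y_{B_j}‖². There exists a universal constant c > 0 such that with probability at least 1 − exp(−c·M), min_{z ∈ ℝ^k} max_{z' ∈ ℝ^k} median_{1 ≤ j ≤ M} (ℓ_j(z) − ℓ_j(z')) ≤ 4σ². -/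
/-!
At `z = z*` the batch losses are `ℓ_j(z*) = (1/b)‖η_{B_j}‖²`, and since all losses are
nonnegative, `ℓ_j(z*) - ℓ_j(z') ≤ ℓ_j(z*)` for every `z'`. Hence the objective is at most `4σ²`
as soon as at least half of the batches satisfy `ℓ_j(z*) ≤ 4σ²`. As `E ℓ_j(z*) ≤ σ²`, Markov's
inequality makes each batch fail with probability at most `1/4`; the batches are independent, so
by Hoeffding's inequality at least half of them fail with probability at most `exp(-M/8)`.
-/

open MeasureTheory ProbabilityTheory Real

noncomputable section

/-- The (lower) median of a finite tuple of reals: the least `t` such that at least `⌈M/2⌉`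
of the entries are `≤ t`. -/
def vecMedian {M : ℕ} (v : Fin M → ℝ) : ℝ :=
  sInf {t : ℝ | (M + 1) / 2 ≤ (Finset.univ.filter (fun j => v j ≤ t)).card}

/-- In `ℝ`, `sInf` of a set that is not bounded below is `0`, hence the hypothesis `0 ≤ a`. -/
lemma Real.sInf_le_of_le_of_nonneg {s : Set ℝ} {a b : ℝ} (hb : b ∈ s) (hba : b ≤ a)
    (ha : 0 ≤ a) : sInf s ≤ a := by
  by_cases hs : BddBelow s
  · exact (csInf_le hs hb).trans hba
  · rwa [Real.sInf_of_not_bddBelow hs]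

lemma vecMedian_le_of_le_card {M : ℕ} {v : Fin M → ℝ} {t : ℝ} (ht : 0 ≤ t)
    (h : (M + 1) / 2 ≤ (Finset.univ.filter (fun j => v j ≤ t)).card) : vecMedian v ≤ t :=
  Real.sInf_le_of_le_of_nonneg h le_rfl ht

lemma iInf_iSup_vecMedian_sub_le {Z : Type*} {M : ℕ} (ℓ : Z → Fin M → ℝ)
    (hℓ : ∀ z j, 0 ≤ ℓ z j) (z₀ : Z) {t : ℝ} (ht : 0 ≤ t)
    (h : (M + 1) / 2 ≤ (Finset.univ.filter (fun j => ℓ z₀ j ≤ t)).card) :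
    ⨅ z, ⨆ z', vecMedian (fun j => ℓ z j - ℓ z' j) ≤ t := by
  have hz₀ : ⨆ z', vecMedian (fun j => ℓ z₀ j - ℓ z' j) ≤ t :=
    Real.iSup_le (fun z' ↦ vecMedian_le_of_le_card ht <| h.trans <| Finset.card_le_card <|
      Finset.monotone_filter_right _ fun j _ hj ↦ by linarith [hℓ z' j]) ht
  exact Real.sInf_le_of_le_of_nonneg (Set.mem_range_self z₀) hz₀ ht

lemma card_le_two_mul_card_filter_not_of_card_filter_lt {α : Type*} [Fintype α] {p : α → Prop}
    [DecidablePred p] (h : (Finset.univ.filter p).card < (Fintype.card α + 1) / 2) :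
    Fintype.card α ≤ 2 * (Finset.univ.filter fun x ↦ ¬ p x).card := by
  have := Finset.card_filter_add_card_filter_not (s := Finset.univ) p
  rw [Finset.card_univ] at this
  omega

def meanSq {b : ℕ} (v : Fin b → ℝ) : ℝ := (1 / (b : ℝ)) * ∑ i, v i ^ 2

lemma measurable_meanSq {b : ℕ} : Measurable (meanSq : (Fin b → ℝ) → ℝ) := by
  unfold meanSq; fun_prop

lemma meanSq_nonneg {b : ℕ} (v : Fin b → ℝ) : 0 ≤ meanSq v := by
  unfold meanSq; positivity

section Probability

variable {Ω : Type*} [MeasurableSpace Ω] {μ : Measure Ω}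

lemma integral_meanSq_le {b : ℕ} {v : Ω → Fin b → ℝ}
    (hint : ∀ i, Integrable (fun ω ↦ v ω i ^ 2) μ) {s : ℝ} (hs : 0 ≤ s)
    (hle : ∀ i, ∫ ω, v ω i ^ 2 ∂μ ≤ s) : ∫ ω, meanSq (v ω) ∂μ ≤ s := by
  unfold meanSq
  rw [integral_const_mul, integral_finsetSum _ fun i _ ↦ hint i]
  calc 1 / (b : ℝ) * ∑ i, ∫ ω, v ω i ^ 2 ∂μ ≤ 1 / b * ∑ _i : Fin b, s := by
        gcongr with i; exact hle i
    _ ≤ s := by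
        rcases b.eq_zero_or_pos with rfl | hb
        · simpa using hs
        · simp [field]

lemma measureReal_lt_le_inv_of_integral_le [IsFiniteMeasure μ] {X : Ω → ℝ} (hX : 0 ≤ X)
    (hint : Integrable X μ) {s c : ℝ} (hs : ∫ ω, X ω ∂μ ≤ s) (hc : 0 < c) :
    μ.real {ω | c * s < X ω} ≤ c⁻¹ := by
  rcases (integral_nonneg hX |>.trans hs).eq_or_lt with hs0 | hs0
  · have hX0 : X =ᵐ[μ] 0 :=
      (integral_eq_zero_iff_of_nonneg hX hint).1 (le_antisymm (hs0 ▸ hs) (integral_nonneg hX))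
    have hnull : μ {ω | c * s < X ω} = 0 :=
      measure_mono_null (fun ω (hω : c * s < X ω) ↦ by
        rw [← hs0, mul_zero] at hω; exact hω.ne') (ae_iff.1 hX0)
    simp [measureReal_def, hnull, hc.le]
  · have hmarkov := mul_meas_ge_le_integral_of_nonneg (ae_of_all μ hX) hint (c * s)
    have hmono : μ.real {ω | c * s < X ω} ≤ μ.real {ω | c * s ≤ X ω} :=
      measureReal_mono fun ω (hω : c * s < X ω) ↦ hω.le
    have hcm : c * μ.real {ω | c * s ≤ X ω} * s ≤ 1 * s := by linarith
    rw [← one_div, le_div_iff₀ hc]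
    nlinarith [le_of_mul_le_mul_right hcm hs0]

lemma one_sub_le_measure_of_compl_subset [IsProbabilityMeasure μ] {T S : Set Ω} {δ : ℝ}
    (hTS : Tᶜ ⊆ S) (hS : μ.real S ≤ δ) : 1 - ENNReal.ofReal δ ≤ μ T := by
  rw [tsub_le_iff_right]
  calc 1 = μ Set.univ := measure_univ.symm
    _ ≤ μ T + μ Tᶜ := measure_univ_le_add_compl T
    _ ≤ μ T + μ S := by gcongr
    _ = μ T + ENNReal.ofReal (μ.real S) := by rw [ofReal_measureReal]
    _ ≤ μ T + ENNReal.ofReal δ := by gcongr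

lemma ProbabilityTheory.iIndepFun.curry {ι κ X : Type*} [MeasurableSpace X]
    {η : ι × κ → Ω → X} (hη : ∀ p, Measurable (η p)) (h : iIndepFun η μ) :
    iIndepFun (fun i ω j ↦ η (i, j) ω) μ := by
  have := h.isProbabilityMeasure
  have (p : ι × κ) : IsProbabilityMeasure (μ.map (η p)) :=
    Measure.isProbabilityMeasure_map (hη p).aemeasurable
  rw [iIndepFun_iff_map_fun_eq_infinitePi_map (by fun_prop)]
  calc μ.map (fun ω i j ↦ η (i, j) ω)
      = (μ.map fun ω p ↦ η p ω).map (MeasurableEquiv.curry ι κ X) := by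
        rw [Measure.map_map (by fun_prop) (by fun_prop)]; rfl
    _ = Measure.infinitePi fun i ↦ Measure.infinitePi fun j ↦ μ.map (η (i, j)) := by
        rw [h.map_fun_eq_infinitePi_map hη]
        exact Measure.infinitePi_map_curry fun i j ↦ μ.map (η (i, j))
    _ = Measure.infinitePi fun i ↦ μ.map fun ω j ↦ η (i, j) ω := by
        congr! with i
        exact ((h.precomp (Prod.mk_right_injective i)).map_fun_eq_infinitePi_map
          fun j ↦ hη (i, j)).symm

lemma ProbabilityTheory.measureReal_sum_ge_le_of_iIndepFun_of_mem_Icc [IsProbabilityMeasure μ]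
    {ι : Type*} [Fintype ι] {Y : ι → Ω → ℝ} (hind : iIndepFun Y μ)
    (hmeas : ∀ i, Measurable (Y i)) (hY : ∀ i ω, Y i ω ∈ Set.Icc 0 1)
    {p t : ℝ} (hp : ∀ i, μ[Y i] ≤ p) (ht : 0 ≤ t) :
    μ.real {ω | (p + t) * Fintype.card ι ≤ ∑ i, Y i ω} ≤ exp (-2 * t ^ 2 * Fintype.card ι) := by
  set n : ℝ := (Fintype.card ι : ℝ)
  have hcentered : iIndepFun (fun i ω ↦ Y i ω - μ[Y i]) μ :=
    hind.comp (fun i u ↦ u - ∫ ω, Y i ω ∂μ) fun i ↦ measurable_id.sub_const _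
  have hsubG (i : ι) : HasSubgaussianMGF (fun ω ↦ Y i ω - μ[Y i]) (1 / 4) μ := by
    have h := hasSubgaussianMGF_of_mem_Icc (μ := μ) (hmeas i).aemeasurable (ae_of_all _ (hY i))
    norm_num at h
    exact h
  have hsub : {ω | (p + t) * n ≤ ∑ i, Y i ω} ⊆
      {ω | t * n ≤ ∑ i ∈ Finset.univ, (Y i ω - μ[Y i])} := by
    intro ω hω
    simp only [Set.mem_ofPred_eq, Finset.sum_sub_distrib] at hω ⊢
    have : ∑ i, μ[Y i] ≤ p * n := by
      simpa [n, mul_comm] using Finset.sum_le_sum fun i (_ : i ∈ Finset.univ) ↦ hp i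
    linarith
  calc μ.real {ω | (p + t) * n ≤ ∑ i, Y i ω}
      ≤ μ.real {ω | t * n ≤ ∑ i ∈ Finset.univ, (Y i ω - μ[Y i])} := measureReal_mono hsub
    _ ≤ exp (-(t * n) ^ 2 / (2 * ((∑ _i : ι, (1 / 4 : NNReal) : NNReal) : ℝ))) :=
        HasSubgaussianMGF.measure_sum_ge_le_of_iIndepFun hcentered (fun i _ ↦ hsubG i)
          (by positivity)
    _ = exp (-2 * t ^ 2 * n) := by
        rcases eq_or_ne n 0 with hn | hn
        · simp [hn]
        · congr 1
          push_cast [Finset.sum_const, Finset.card_univ, nsmul_eq_mul]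
          change -(t * n) ^ 2 / (2 * (n * (1 / 4))) = -2 * t ^ 2 * n
          field_simp
          ring

lemma measureReal_card_meanSq_le_lt_half_le_exp [IsProbabilityMeasure μ] {M b : ℕ}
    {η : Fin M × Fin b → Ω → ℝ}
    (hη : ∀ p, Measurable (η p)) (hind : iIndepFun η μ)
    (hsq : ∀ p, Integrable (fun ω ↦ η p ω ^ 2) μ) {σ : ℝ}
    (hvar : ∀ p, ∫ ω, η p ω ^ 2 ∂μ ≤ σ ^ 2) :
    μ.real {ω | (Finset.univ.filter
        (fun j => meanSq (fun i ↦ η (j, i) ω) ≤ 4 * σ ^ 2)).card < (M + 1) / 2} ≤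
      exp (-(M / 8)) := by
  set bad : Fin M → Set Ω := fun j ↦ {ω | 4 * σ ^ 2 < meanSq (fun i ↦ η (j, i) ω)}
  set Y : Fin M → Ω → ℝ := fun j ↦ (bad j).indicator 1
  have hbad_meas (j : Fin M) : MeasurableSet (bad j) :=
    measurableSet_lt measurable_const (measurable_meanSq.comp (by fun_prop))
  have hind_Y : iIndepFun Y μ :=
    (hind.curry hη).comp (fun _ ↦ {v | 4 * σ ^ 2 < meanSq v}.indicator 1)
      fun _ ↦ measurable_const.indicator (measurableSet_lt measurable_const measurable_meanSq)
  have hmean_Y (j : Fin M) : μ[Y j] ≤ 1 / 4 := by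
    rw [integral_indicator_one (hbad_meas j), one_div]
    exact measureReal_lt_le_inv_of_integral_le (fun ω ↦ meanSq_nonneg _)
      ((integrable_finsetSum _ fun i _ ↦ hsq (j, i)).const_mul _)
      (integral_meanSq_le (fun i ↦ hsq (j, i)) (sq_nonneg σ) fun i ↦ hvar (j, i)) four_pos
  have hsub : {ω | (Finset.univ.filter
      (fun j => meanSq (fun i ↦ η (j, i) ω) ≤ 4 * σ ^ 2)).card < (M + 1) / 2} ⊆
      {ω | (1 / 4 + 1 / 4) * Fintype.card (Fin M) ≤ ∑ j, Y j ω} := by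
    intro ω hω
    have hhalf := card_le_two_mul_card_filter_not_of_card_filter_lt
      (p := fun j ↦ meanSq (fun i ↦ η (j, i) ω) ≤ 4 * σ ^ 2) (by simpa using hω)
    simp only [Fintype.card_fin, not_le] at hhalf
    have hsum : ∑ j, Y j ω =
        (Finset.univ.filter fun j ↦ 4 * σ ^ 2 < meanSq (fun i ↦ η (j, i) ω)).card := by
      simp [Y, bad, Set.indicator_apply, Finset.sum_boole]
    simp only [Set.mem_ofPred_eq, hsum, Fintype.card_fin]
    have := (Nat.cast_le (α := ℝ)).2 hhalf
    push_cast at this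
    linarith
  calc _ ≤ _ := measureReal_mono hsub
    _ ≤ exp (-2 * (1 / 4) ^ 2 * Fintype.card (Fin M)) :=
        measureReal_sum_ge_le_of_iIndepFun_of_mem_Icc hind_Y
          (fun j ↦ measurable_const.indicator (hbad_meas j))
          (fun j ω ↦ by by_cases h : ω ∈ bad j <;> simp [Y, h]) hmean_Y (by norm_num)
    _ = exp (-(M / 8)) := by rw [Fintype.card_fin]; ring_nf

end Probability

/-- (\Cref{lemma: obj min value}.) Let `G : ℝ^k → ℝ^n` be any function,
`z*` fixed, and `y = A G(z*) + η` where `A` is any random matrix (rows indexed by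
`Fin M × Fin b`, batch `j` being the rows `(j, ·)`) and `η` has i.i.d. mean-zero
variance-`σ²` entries independent of `A`. With `ℓ_j(z) = (1/b)‖A_{B_j} G(z) - y_{B_j}‖²`,
there is a universal constant `c > 0` such that with probability at least `1 - exp(-c M)`,
`min_z max_{z'} median_j (ℓ_j(z) - ℓ_j(z')) ≤ 4σ²`. -/
theorem mom_objective_min_value :
    ∃ c : ℝ, 0 < c ∧
      ∀ (Ω : Type) (_ : MeasurableSpace Ω) (μ : Measure Ω), IsProbabilityMeasure μ →
      ∀ (k n M b : ℕ) (σ : ℝ) (G : (Fin k → ℝ) → (Fin n → ℝ)) (zstar : Fin k → ℝ)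
        (a : Fin M × Fin b → Ω → Fin n → ℝ)
        (η : Fin M × Fin b → Ω → ℝ) (η₀ : Ω → ℝ) (y : Fin M × Fin b → Ω → ℝ),
        (∀ i, Measurable (a i)) → (∀ i, Measurable (η i)) →
        iIndepFun η μ →
        (∀ i, IdentDistrib (η i) η₀ μ μ) →
        Integrable η₀ μ → Integrable (fun ω => (η₀ ω) ^ 2) μ →
        (∫ ω, η₀ ω ∂μ) = 0 → (∫ ω, (η₀ ω) ^ 2 ∂μ) = σ ^ 2 →
        IndepFun (fun ω i => a i ω) (fun ω i => η i ω) μ →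
        (∀ i ω, y i ω = dotp (a i ω) (G zstar) + η i ω) →
        1 - ENNReal.ofReal (Real.exp (-(c * M))) ≤
          μ {ω |
            (⨅ z : Fin k → ℝ, ⨆ z' : Fin k → ℝ,
              vecMedian (fun j : Fin M =>
                (1 / (b : ℝ)) * ∑ i : Fin b, (dotp (a (j, i) ω) (G z) - y (j, i) ω) ^ 2 -
                (1 / (b : ℝ)) * ∑ i : Fin b, (dotp (a (j, i) ω) (G z') - y (j, i) ω) ^ 2)) ≤
              4 * σ ^ 2} := by
  refine ⟨1 / 8, by norm_num, ?_⟩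
  intro Ω _ μ _ k n M b σ G zstar a η η₀ y _ hη hind hid _ hsq₀ _ hvar₀ _ hy
  have hsq (p : Fin M × Fin b) : IdentDistrib (fun ω ↦ η p ω ^ 2) (fun ω ↦ η₀ ω ^ 2) μ μ :=
    (hid p).comp (measurable_id.pow_const 2)
  refine one_sub_le_measure_of_compl_subset ?_ <|
    (measureReal_card_meanSq_le_lt_half_le_exp hη hind (fun p ↦ (hsq p).integrable_iff.2 hsq₀)
      fun p ↦ ((hsq p).integral_eq.trans hvar₀).le).trans_eq (by ring_nf)
  intro ω hω
  by_contra hfew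
  refine hω (iInf_iSup_vecMedian_sub_le _ (fun z j ↦ ?_) zstar ?_ ?_)
  · positivity
  · positivity
  · simpa [hy, meanSq] using hfew

end
end
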